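/- In the linear 2-layer GNN of the previous statement, the DeepLIFT path contribution with reference graph G0 = empty graph equals the GNN-LRP (γ=0) relevance of the path: for a walk p = (I,K,J) in G1, both equal x_I Θ^{(1)} Θ^{(2)} evaluated at class j, i.e. LRP backpropagation R_p = Σ_i m_{Δh_i → Δz_j} h_i^{(0)} = (x_I Θ^{(1)} Θ^{(2)})_j. -/

import Mathlib

/-!
Both attributions expand the logit `(x Θ1 Θ2)_j` along the hidden unit `v`. In GNN-LRP each
intermediate preactivation `z_v` appears once as a denominator and once in the next layer's
numerator, so the ratios telescope; with an all-zero DeepLIFT reference `Δh = h`, so the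
multipliers are the plain weight products.
-/

open Finset

theorem Matrix.vecMul_vecMul_apply_eq_sum_sum {K m n o : Type*} [CommSemiring K]
    [Fintype m] [Fintype n] (x : m → K) (A : Matrix m n K) (B : Matrix n o K) (j : o) :
    Matrix.vecMul (Matrix.vecMul x A) B j = ∑ i, ∑ v, x i * A i v * B v j := by
  simp only [Matrix.vecMul, dotProduct, sum_mul]
  exact sum_comm

theorem lrp_ratio_telescope {K : Type*} [Field K] (a b z w : K) (hz : z ≠ 0) (hw : w ≠ 0) :
    a / z * (z * b / w) * w = a * b := by
  field_simp

/-- For a walk `p = (I, K, J)` in a linear two-layer sum-aggregation GNN: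
the GNN-LRP (γ = 0) relevance of the path and the DeepLIFT contribution
(with empty-graph, i.e. all-zero, reference) both equal `(x_I Θ1 Θ2)_j`.
`zK` is the hidden preactivation vector at node `K` (which equals the hidden
activation since the network is linear), `zj` is the output logit. -/
theorem deeplift_empty_reference_eq_gnnlrp {d d' c : ℕ}
    (x : Fin d → ℝ)
    (Θ1 : Matrix (Fin d) (Fin d') ℝ) (Θ2 : Matrix (Fin d') (Fin c) ℝ)
    (zK : Fin d' → ℝ) (hzK : ∀ v, zK v ≠ 0)
    (j : Fin c) (zj : ℝ) (hzj : zj ≠ 0) :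
    -- GNN-LRP relevance of the path
    (∑ i, ∑ v, (x i * Θ1 i v / zK v) * (zK v * Θ2 v j / zj) * zj
      = Matrix.vecMul (Matrix.vecMul x Θ1) Θ2 j) ∧
    -- DeepLIFT contribution with zero reference: Σ_i m_{Δh_i Δz_j} h_i
    (∑ i, (∑ v, Θ1 i v * Θ2 v j) * x i
      = Matrix.vecMul (Matrix.vecMul x Θ1) Θ2 j) := by
  rw [Matrix.vecMul_vecMul_apply_eq_sum_sum]
  constructor
  · refine sum_congr rfl fun i _ => sum_congr rfl fun v _ => ?_
    exact lrp_ratio_telescope _ _ _ _ (hzK v) hzj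
  · refine sum_congr rfl fun i _ => ?_
    rw [sum_mul]
    exact sum_congr rfl fun v _ => by ring
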